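/- arXiv:2305.17935 — 2 statements merged into one kernel-verified Lean document; each statement's English description precedes it below -/
import Mathlib

section
/- Every trace Mazurkiewicz-equivalent to the trace a :: b^ω (i.e., s 0 = a and s n = b for n ≥ 1), where a ≠ b and I a b, contains the letter a exactly once: if t ≡_I s then there is a unique n with t n = a, and t m = b for all m ≠ n. -/
def Swap {σ : Type*} (I : σ → σ → Prop) (s t : ℕ → σ) : Prop :=
  ∃ k, (∀ n < k, t n = s n) ∧ I (s k) (s (k + 1)) ∧
    t k = s (k + 1) ∧ t (k + 1) = s k ∧ (∀ n ≥ k + 2, t n = s n)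

lemma swap_preserve {σ : Type*} {I : σ → σ → Prop} {a b : σ}
    {s t : ℕ → σ} (h : ∃ n, s n = a ∧ ∀ m, m ≠ n → s m = b)
    (hst : Swap I s t) : ∃ n, t n = a ∧ ∀ m, m ≠ n → t m = b := by
  obtain ⟨n, hn, hb⟩ := h
  obtain ⟨k, h1, _, h2, h3, h4⟩ := hst
  have tval : ∀ m, m ≠ k → m ≠ k + 1 → t m = s m := by
    intro m hm hm1
    rcases lt_or_ge m k with h | h
    · exact h1 m h
    · have : m ≥ k + 2 := by omega
      exact h4 m this
  by_cases hk : n = k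
  · refine ⟨k + 1, by rw [h3, ← hk, hn], ?_⟩
    intro m hm
    by_cases hmk : m = k
    · rw [hmk, h2]; exact hb _ (by omega)
    · rw [tval m hmk hm]; exact hb _ (by omega)
  · by_cases hk1 : n = k + 1
    · refine ⟨k, by rw [h2, ← hk1, hn], ?_⟩
      intro m hm
      by_cases hmk : m = k + 1
      · rw [hmk, h3]; exact hb _ (by omega)
      · rw [tval m hm hmk]; exact hb _ (by omega)
    · refine ⟨n, by rw [tval n (Ne.symm (by omega)) (Ne.symm (by omega))]; exact hn, ?_⟩
      intro m hm
      by_cases hmk : m = k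
      · rw [hmk, h2]; exact hb _ (by omega)
      · by_cases hmk1 : m = k + 1
        · rw [hmk1, h3]; exact hb _ (by omega)
        · rw [tval m hmk hmk1]; exact hb _ hm

theorem swapA_exactly_once {σ : Type*} (I : σ → σ → Prop) (a b : σ)
    (hab : a ≠ b) (hI : I a b) (s : ℕ → σ) (hs0 : s 0 = a)
    (hsn : ∀ n ≥ 1, s n = b) (t : ℕ → σ)
    (ht : Relation.ReflTransGen (Swap I) s t) :
    ∃! n : ℕ, t n = a ∧ ∀ m, m ≠ n → t m = b := by
  have key : ∃ n, t n = a ∧ ∀ m, m ≠ n → t m = b := by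
    induction ht with
    | refl => exact ⟨0, hs0, fun m hm => hsn m (by omega)⟩
    | tail _ hstep ih => exact swap_preserve ih hstep
  obtain ⟨n, hn, hb⟩ := key
  refine ⟨n, ⟨hn, hb⟩, ?_⟩
  rintro m ⟨hm, -⟩
  by_contra h
  have := hb m h
  rw [hm] at this
  exact hab this
end

section
/- For the trace s = a :: b^ω with I a b, and for every n, the trace t_n defined by t_n n = a and t_n m = b for m ≠ n satisfies t_n ≡_I s; i.e., the swap closure contains a at every position, and the Mazurkiewicz trace of s is exactly {t_n | n : ℕ}. -/
theorem swapA_exact_class {σ : Type*} (I : σ → σ → Prop) (a b : σ)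
    (hab : a ≠ b) (hIab : I a b) (hIba : I b a) (s : ℕ → σ)
    (hs0 : s 0 = a) (hsn : ∀ n ≥ 1, s n = b) :
    (∀ n : ℕ, Relation.ReflTransGen (Swap I) s
      (fun m => if m = n then a else b)) ∧
    {t | Relation.ReflTransGen (Swap I) s t} =
      {t | ∃ n : ℕ, t = fun m => if m = n then a else b} := by
  set T : ℕ → ℕ → σ := fun n m => if m = n then a else b with hT
  have hs : s = T 0 := by
    funext m
    rcases Nat.eq_zero_or_pos m with h | h
    · simp [hT, h, hs0]
    · have : m ≠ 0 := by omega
      simp [hT, this, hsn m h]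
  have hstep : ∀ n, Swap I (T n) (T (n + 1)) := by
    intro n
    refine ⟨n, ?_, ?_, ?_, ?_, ?_⟩
    · intro m hm
      have h1 : m ≠ n := by omega
      have h2 : m ≠ n + 1 := by omega
      simp [hT, h1, h2]
    · simp [hT, hIab]
    · simp [hT]
    · simp [hT]
    · intro m hm
      have h1 : m ≠ n := by omega
      have h2 : m ≠ n + 1 := by omega
      simp [hT, h1, h2]
  have hreach : ∀ n, Relation.ReflTransGen (Swap I) s (T n) := by
    intro n
    induction n with
    | zero => rw [hs]
    | succ n ih => exact ih.tail (hstep n)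
  have hfwd : ∀ n u, Swap I (T n) u → ∃ m, u = T m := by
    intro n u ⟨k, h1, hI, h2, h3, h4⟩
    by_cases hk : k = n
    · refine ⟨n + 1, ?_⟩
      funext m
      by_cases hm1 : m < k
      · have e1 : m ≠ n := by omega
        have e2 : m ≠ n + 1 := by omega
        rw [h1 m hm1]; simp [hT, e1, e2]
      by_cases hm2 : m = k
      · have e1 : k + 1 ≠ n := by omega
        have e2 : k ≠ n + 1 := by omega
        rw [hm2, h2]; simp [hT, e1, e2]
      by_cases hm3 : m = k + 1
      · rw [hm3, h3]; simp [hT, hk]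
      · have hge : m ≥ k + 2 := by omega
        have e1 : m ≠ n := by omega
        have e2 : m ≠ n + 1 := by omega
        rw [h4 m hge]; simp [hT, e1, e2]
    by_cases hk1 : k + 1 = n
    · refine ⟨k, ?_⟩
      funext m
      by_cases hm1 : m < k
      · have e1 : m ≠ n := by omega
        have e2 : m ≠ k := by omega
        rw [h1 m hm1]; simp [hT, e1, e2]
      by_cases hm2 : m = k
      · rw [hm2, h2]; simp [hT, hk1]
      by_cases hm3 : m = k + 1
      · have e1 : k ≠ n := hk
        have e2 : k + 1 ≠ k := by omega
        rw [hm3, h3]; simp [hT, e1, e2]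
      · have hge : m ≥ k + 2 := by omega
        have e1 : m ≠ n := by omega
        have e2 : m ≠ k := by omega
        rw [h4 m hge]; simp [hT, e1, e2]
    · refine ⟨n, ?_⟩
      funext m
      by_cases hm1 : m < k
      · rw [h1 m hm1]
      by_cases hm2 : m = k
      · rw [hm2, h2]; simp [hT, hk, hk1]
      by_cases hm3 : m = k + 1
      · rw [hm3, h3]; simp [hT, hk, hk1]
      · have hge : m ≥ k + 2 := by omega
        rw [h4 m hge]
  refine ⟨hreach, ?_⟩
  ext t
  simp only [Set.mem_setOf_eq]
  constructor
  · intro h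
    induction h with
    | refl => exact ⟨0, hs⟩
    | tail _ hstep' ih =>
      obtain ⟨n, rfl⟩ := ih
      exact hfwd n _ hstep'
  · rintro ⟨n, rfl⟩
    exact hreach n
end
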